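/- Let n ≥ 1 and let Δₙ = {x ∈ ℝ^{n+1} : x_i ≥ 0 for all i, and x_0 + x_1 + ⋯ + x_n = 1} be the standard n-simplex. For each i ∈ {0, …, n} set Q_i = {x ∈ Δₙ : x_j ≤ x_i for all j}. Then: (a) Δₙ = Q_0 ∪ Q_1 ∪ ⋯ ∪ Q_n; (b) for all i ≠ j, the linear isometry of ℝ^{n+1} that transposes the i-th and j-th coordinates maps Q_i bijectively onto Q_j (so the sets Q_0, …, Q_n are pairwise congruent); and (c) each Q_i is homeomorphic to the cube [0,1]ⁿ. -/

import Mathlib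

open Set

/-- The standard `n`-simplex in `ℝ^{n+1}`: nonnegative coordinates summing to `1`. -/
def stdSimplexSet (n : ℕ) : Set (EuclideanSpace ℝ (Fin (n + 1))) :=
  {x | (∀ i, 0 ≤ x i) ∧ ∑ i, x i = 1}

/-- The piece `Q_i` of the simplex where the `i`-th coordinate is maximal
(the closed star of the vertex `e_i` in the barycentric subdivision). -/
def simplexPiece (n : ℕ) (i : Fin (n + 1)) : Set (EuclideanSpace ℝ (Fin (n + 1))) :=
  {x ∈ stdSimplexSet n | ∀ j, x j ≤ x i}

/-- The map of `ℝ^{n+1}` transposing the `i`-th and `j`-th coordinates. -/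
def coordSwap (n : ℕ) (i j : Fin (n + 1)) :
    EuclideanSpace ℝ (Fin (n + 1)) → EuclideanSpace ℝ (Fin (n + 1)) :=
  fun x => WithLp.toLp 2 (fun k => x (Equiv.swap i j k))

/-- The unit cube `[0,1]ⁿ` in `ℝⁿ`. -/
def unitCube (n : ℕ) : Set (EuclideanSpace ℝ (Fin n)) :=
  {x | ∀ k, x k ∈ Icc (0 : ℝ) 1}

/- ## Auxiliary lemmas -/

lemma piece_pos {n : ℕ} {i : Fin (n + 1)} {x : EuclideanSpace ℝ (Fin (n + 1))}
    (hx : x ∈ simplexPiece n i) : 0 < x i := by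
  rcases hx with ⟨⟨hnn, hsum⟩, hmax⟩
  by_contra h
  push_neg at h
  have hzero : ∀ k, x k = 0 := fun k => le_antisymm (le_trans (hmax k) h) (hnn k)
  simp [hzero] at hsum

/-- The map from `Q_i` to the cube: coordinates away from `i`, rescaled by `x i`. -/
noncomputable def pieceToCube (n : ℕ) (i : Fin (n + 1)) (x : EuclideanSpace ℝ (Fin (n + 1))) :
    EuclideanSpace ℝ (Fin n) :=
  WithLp.toLp 2 (fun j => x (i.succAbove j) / x i)

/-- The inverse map from the cube to `Q_i`. -/
noncomputable def cubeToPiece (n : ℕ) (i : Fin (n + 1)) (y : EuclideanSpace ℝ (Fin n)) :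
    EuclideanSpace ℝ (Fin (n + 1)) :=
  WithLp.toLp 2 (fun k => ((finSuccEquiv' i k).elim 1 fun j => y j) / (1 + ∑ j, y j))

lemma cube_denom_pos {n : ℕ} {y : EuclideanSpace ℝ (Fin n)} (hy : y ∈ unitCube n) :
    (0 : ℝ) < 1 + ∑ j, y j := by
  have : (0:ℝ) ≤ ∑ j, y j := Finset.sum_nonneg fun j _ => (hy j).1
  linarith

lemma cubeToPiece_at {n : ℕ} (i : Fin (n + 1)) (y : EuclideanSpace ℝ (Fin n)) :
    cubeToPiece n i y i = 1 / (1 + ∑ j, y j) := by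
  simp [cubeToPiece, finSuccEquiv'_at]

lemma cubeToPiece_succAbove {n : ℕ} (i : Fin (n + 1)) (y : EuclideanSpace ℝ (Fin n)) (j : Fin n) :
    cubeToPiece n i y (i.succAbove j) = y j / (1 + ∑ j, y j) := by
  simp [cubeToPiece, finSuccEquiv'_succAbove]

lemma pieceToCube_mem {n : ℕ} {i : Fin (n + 1)} {x : EuclideanSpace ℝ (Fin (n + 1))}
    (hx : x ∈ simplexPiece n i) : pieceToCube n i x ∈ unitCube n := by
  intro j
  have hpos := piece_pos hx
  exact ⟨div_nonneg (hx.1.1 _) hpos.le, (div_le_one hpos).2 (hx.2 _)⟩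

lemma cubeToPiece_mem {n : ℕ} {i : Fin (n + 1)} {y : EuclideanSpace ℝ (Fin n)}
    (hy : y ∈ unitCube n) : cubeToPiece n i y ∈ simplexPiece n i := by
  have hd := cube_denom_pos hy
  refine ⟨⟨fun k => ?_, ?_⟩, fun k => ?_⟩
  · refine div_nonneg ?_ hd.le
    rcases h : finSuccEquiv' i k with _ | j
    · simp
    · simpa using (hy j).1
  · rw [Fin.sum_univ_succAbove (fun k => cubeToPiece n i y k) i, cubeToPiece_at]
    simp only [cubeToPiece_succAbove]
    rw [← Finset.sum_div, ← add_div, div_eq_one_iff_eq hd.ne']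
  · rw [cubeToPiece_at]
    have h1 : ((finSuccEquiv' i k).elim 1 fun j => y j : ℝ) ≤ 1 := by
      rcases finSuccEquiv' i k with _ | j
      · simp
      · simpa using (hy j).2
    exact (div_le_div_iff_of_pos_right hd).2 h1

lemma cubeToPiece_pieceToCube {n : ℕ} {i : Fin (n + 1)} {x : EuclideanSpace ℝ (Fin (n + 1))}
    (hx : x ∈ simplexPiece n i) : cubeToPiece n i (pieceToCube n i x) = x := by
  have hi := piece_pos hx
  have hS : (1 : ℝ) + ∑ j, pieceToCube n i x j = 1 / x i := by
    unfold pieceToCube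
    rw [← Finset.sum_div]
    have hs : ∑ j, x (i.succAbove j) = 1 - x i := by
      have := Fin.sum_univ_succAbove (fun k => x k) i
      have h1 := hx.1.2
      simp only at this h1 ⊢
      linarith
    rw [hs]
    field_simp
    ring
  ext k
  rcases h : finSuccEquiv' i k with _ | j
  · have hk : k = i := by
      have := congrArg (finSuccEquiv' i).symm h
      simpa [finSuccEquiv'_symm_none] using this
    subst hk
    rw [cubeToPiece_at, hS, one_div_one_div]
  · have hk : k = i.succAbove j := by
      have := congrArg (finSuccEquiv' i).symm h
      simpa [finSuccEquiv'_symm_some] using this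
    subst hk
    rw [cubeToPiece_succAbove, hS]
    unfold pieceToCube
    field_simp

lemma pieceToCube_cubeToPiece {n : ℕ} {i : Fin (n + 1)} {y : EuclideanSpace ℝ (Fin n)}
    (hy : y ∈ unitCube n) : pieceToCube n i (cubeToPiece n i y) = y := by
  have hd := cube_denom_pos hy
  ext j
  show cubeToPiece n i y (i.succAbove j) / cubeToPiece n i y i = y j
  rw [cubeToPiece_succAbove, cubeToPiece_at]
  field_simp

/-- The explicit homeomorphism between `Q_i` and the unit cube. -/
noncomputable def pieceHomeo (n : ℕ) (i : Fin (n + 1)) :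
    ↥(simplexPiece n i) ≃ₜ ↥(unitCube n) where
  toFun x := ⟨pieceToCube n i x, pieceToCube_mem x.2⟩
  invFun y := ⟨cubeToPiece n i y, cubeToPiece_mem y.2⟩
  left_inv x := Subtype.ext (cubeToPiece_pieceToCube x.2)
  right_inv y := Subtype.ext (pieceToCube_cubeToPiece y.2)
  continuous_toFun := by
    apply Continuous.subtype_mk
    refine (PiLp.continuous_toLp 2 _).comp ?_
    exact continuous_pi fun j =>
      (((PiLp.continuous_apply 2 _ (i.succAbove j)).comp continuous_subtype_val).div
        ((PiLp.continuous_apply 2 _ i).comp continuous_subtype_val))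
        fun x => (piece_pos x.2).ne'
  continuous_invFun := by
    apply Continuous.subtype_mk
    refine (PiLp.continuous_toLp 2 _).comp ?_
    refine continuous_pi fun k => Continuous.div ?_ ?_ ?_
    · rcases finSuccEquiv' i k with _ | j
      · simpa using continuous_const
      · exact (PiLp.continuous_apply 2 _ j).comp continuous_subtype_val
    · exact continuous_const.add
        (continuous_finset_sum _ fun j _ => (PiLp.continuous_apply 2 _ j).comp continuous_subtype_val)
    · exact fun y => (cube_denom_pos y.2).ne'

lemma swap_mapsTo (n : ℕ) (i j : Fin (n + 1)) :
    MapsTo (coordSwap n i j) (simplexPiece n i) (simplexPiece n j) := by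
  intro x hx
  refine ⟨⟨fun k => hx.1.1 _, ?_⟩, fun k => ?_⟩
  · rw [← hx.1.2]
    exact Fintype.sum_equiv (Equiv.swap i j) _ _ fun k => rfl
  · show x (Equiv.swap i j k) ≤ x (Equiv.swap i j j)
    rw [Equiv.swap_apply_right]
    exact hx.2 _

lemma swap_invol (n : ℕ) (i j : Fin (n + 1)) (x : EuclideanSpace ℝ (Fin (n + 1))) :
    coordSwap n i j (coordSwap n i j x) = x := by
  ext k
  show x ((Equiv.swap i j) ((Equiv.swap i j) k)) = x k
  rw [Equiv.swap_apply_self]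

lemma swap_comm' (n : ℕ) (i j : Fin (n + 1)) : coordSwap n i j = coordSwap n j i := by
  funext x
  ext k
  rw [coordSwap, coordSwap, Equiv.swap_comm]

/-- The standard `n`-simplex is covered by the `n+1` pieces `Q_i`; the coordinate
transposition `(i j)`, a linear isometry of `ℝ^{n+1}`, maps `Q_i` bijectively onto
`Q_j`; and each piece `Q_i` is homeomorphic to the cube `[0,1]ⁿ`. -/
theorem simplex_cubulation (n : ℕ) (hn : 1 ≤ n) :
    (stdSimplexSet n = ⋃ i, simplexPiece n i) ∧
    (∀ i j : Fin (n + 1), i ≠ j →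
      Isometry (coordSwap n i j) ∧
      Set.BijOn (coordSwap n i j) (simplexPiece n i) (simplexPiece n j)) ∧
    (∀ i, Nonempty (↥(simplexPiece n i) ≃ₜ ↥(unitCube n))) := by
  refine ⟨?_, ?_, fun i => ⟨pieceHomeo n i⟩⟩
  · ext x
    simp only [mem_iUnion]
    constructor
    · intro hx
      obtain ⟨i, hi⟩ := Finite.exists_max x
      exact ⟨i, hx, hi⟩
    · rintro ⟨i, hi⟩
      exact hi.1
  · intro i j hij
    constructor
    · apply Isometry.of_dist_eq
      intro x y
      rw [EuclideanSpace.dist_eq, EuclideanSpace.dist_eq]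
      congr 1
      exact Fintype.sum_equiv (Equiv.swap i j) _ _ fun k => rfl
    · exact Set.InvOn.bijOn
        ⟨fun x _ => swap_invol n i j x, fun x _ => swap_invol n i j x⟩
        (swap_mapsTo n i j) (swap_comm' n i j ▸ swap_mapsTo n j i)
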